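/- arXiv:math/0303124 — 2 statements merged into one kernel-verified Lean document; each statement's English description precedes it below -/
import Mathlib

section
/- (Tableau form of the 0-arrow lemma, left factor) Let N ≥ 3 and 2 ≤ k ≤ N−1, with the convention that 'm-semistandard' is false for m > N. Let a and c be columns encoding sign sequences of length N such that a_1 = 1 (i.e., the first sign of the sequence encoded by a is +), and let a' = (a_2, a_3, …, a_N, 1̄), the column encoding the same sequence with the first sign changed to −. If (a, c) is (k−1)-semistandard and not (k+1)-semistandard, then (a', c) is k-semistandard and not (k+2)-semistandard. -/
namespace CrystalPaper

/-- A sign sequence of length `N`: `true` codes `+`, `false` codes `−`. -/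
abbrev Seq (N : ℕ) := Fin N → Bool

/-- The constant sequence `(+,…,+)`. -/
def top (N : ℕ) : Seq N := fun _ => true

/-- The constant sequence `(−,…,−)`. -/
def bot (N : ℕ) : Seq N := fun _ => false

/-- The sequence `(+^k, −^{N−k})` (first `k` entries `+`, the rest `−`). -/
def lowSeq (N k : ℕ) : Seq N := fun i => decide ((i : ℕ) < k)

/-- The number of `−` entries of a sign sequence. -/
def minusCount (N : ℕ) (b : Seq N) : ℕ :=
  (Finset.univ.filter (fun i => b i = false)).card

/-- `B_sp^+`: sign sequences with an even number of `−` entries. -/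
def BspPlus (N : ℕ) (b : Seq N) : Prop := Even (minusCount N b)

/-- `B_sp^−`: sign sequences with an odd number of `−` entries. -/
def BspMinus (N : ℕ) (b : Seq N) : Prop := Odd (minusCount N b)

/-- The column `t(b)` encoding a sign sequence `b`:
the increasing list of the letters `{a : b_a = +} ∪ {ā : b_a = −}` of the alphabet
`S = {1,…,N,N̄,…,1̄}`, where the letter `a` is coded by the natural number `a`
and the barred letter `ā` by `2N+1−a` (so that `N̄,…,1̄` are coded by `N+1,…,2N`). -/
def colList (N : ℕ) (b : Seq N) : List ℕ :=
  Finset.sort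
    (Finset.image (fun i : Fin N => if b i then (i : ℕ) + 1 else 2 * N - (i : ℕ)) Finset.univ) (· ≤ ·)

/-- The type-`D` partial order `⪯` on coded letters: the natural order on the codes,
except that `N` and `N̄` (codes `N` and `N+1`) are incomparable. -/
def preceqD (N x y : ℕ) : Prop := x = y ∨ (x < y ∧ ¬(x = N ∧ y = N + 1))

/-- The pair of columns `(a, c)` is `k`-semistandard: `c_r ⪯ a_{N−k+r}` for all
`1 ≤ r ≤ k` (entries are `1`-based; by convention this is false for `k > N`). -/
def kSemiD (N k : ℕ) (a c : List ℕ) : Prop :=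
  k ≤ N ∧ ∀ r, 1 ≤ r → r ≤ k → preceqD N (c.getD (r - 1) 0) (a.getD (N - k + r - 1) 0)

lemma colList_length (N : ℕ) (b : Seq N) : (colList N b).length = N := by
  rw [colList, Finset.length_sort, Finset.card_image_of_injective _ ?_, Finset.card_univ,
    Fintype.card_fin]
  intro i j hij
  have hi : (i : ℕ) < N := i.isLt
  have hj : (j : ℕ) < N := j.isLt
  have : (i : ℕ) = (j : ℕ) := by
    by_cases h1 : b i <;> by_cases h2 : b j <;> simp [h1, h2] at hij <;> omega
  exact Fin.ext this

lemma colList_le (N : ℕ) (b : Seq N) {x : ℕ} (hx : x ∈ colList N b) : x ≤ 2 * N := by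
  rw [colList, Finset.mem_sort, Finset.mem_image] at hx
  obtain ⟨i, -, rfl⟩ := hx
  have hi : (i : ℕ) < N := i.isLt
  by_cases h : b i <;> simp [h] <;> omega

lemma getD_tail_append (l : List ℕ) (x : ℕ) {j : ℕ} (hj : j + 1 < l.length) :
    (l.tail ++ [x]).getD j 0 = l.getD (j + 1) 0 := by
  rw [List.getD_append _ _ _ _ (by simp [List.length_tail]; omega)]
  simp [List.getD_eq_getElem?_getD, List.getElem?_tail]

/-- tableau form of the `0`-arrow lemma, left factor.  Let `N ≥ 3`,
`2 ≤ k ≤ N−1`, and let `a = t(u)`, `c = t(v)` be columns of sign sequences with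
`a_1 = 1` (first sign of `u` is `+`).  Let `a' = (a_2,…,a_N,1̄)` (code of `1̄` is `2N`),
the column of the sequence with first sign changed to `−`.  If `(a,c)` is
`(k−1)`-semistandard and not `(k+1)`-semistandard, then `(a',c)` is `k`-semistandard
and not `(k+2)`-semistandard (`m`-semistandard is false for `m > N` by convention). -/
theorem zero_arrow_left_factor (N : ℕ) (hN : 3 ≤ N) (k : ℕ) (hk1 : 2 ≤ k) (hk2 : k ≤ N - 1)
    (u v : Seq N) (ha1 : (colList N u).getD 0 0 = 1)
    (hss : kSemiD N (k - 1) (colList N u) (colList N v))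
    (hnss : ¬ kSemiD N (k + 1) (colList N u) (colList N v)) :
    kSemiD N k ((colList N u).tail ++ [2 * N]) (colList N v) ∧
      ¬ kSemiD N (k + 2) ((colList N u).tail ++ [2 * N]) (colList N v) := by
  set a := colList N u with ha
  set c := colList N v with hc
  have hla : a.length = N := colList_length N u
  have hlc : c.length = N := colList_length N v
  have hkN : k ≤ N := by omega
  constructor
  · refine ⟨hkN, fun r h1 hr => ?_⟩
    rcases eq_or_lt_of_le hr with heq | hlt
    · -- r = k : compare with last entry 2N
      subst heq
      have hidx : N - r + r - 1 = N - 1 := by omega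
      rw [hidx]
      have : (a.tail ++ [2 * N]).getD (N - 1) 0 = 2 * N := by
        rw [List.getD_eq_getElem _ _ (by simp [List.length_tail, hla])]
        rw [List.getElem_append_right (by simp [List.length_tail, hla])]
        simp [List.length_tail, hla]
      rw [this]
      have hx : c.getD (r - 1) 0 ≤ 2 * N := by
        rcases lt_or_ge (r - 1) c.length with h | h
        · rw [List.getD_eq_getElem _ _ h]
          exact colList_le N v (List.getElem_mem h)
        · rw [List.getD_eq_default _ _ h]; omega
      rcases eq_or_lt_of_le hx with h | h
      · exact Or.inl h
      · exact Or.inr ⟨h, by omega⟩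
    · -- r < k : use (k-1)-semistandardness
      have hj : (N - k + r - 1) + 1 < a.length := by rw [hla]; omega
      rw [getD_tail_append a (2 * N) hj]
      have hidx : (N - k + r - 1) + 1 = N - (k - 1) + r - 1 := by omega
      rw [hidx]
      exact hss.2 r h1 (by omega)
  · intro ⟨hkN2, hall⟩
    have hk1N : k + 1 ≤ N := by omega
    have hB : ¬ ∀ r, 1 ≤ r → r ≤ k + 1 →
        preceqD N (c.getD (r - 1) 0) (a.getD (N - (k + 1) + r - 1) 0) :=
      fun hb => hnss ⟨hk1N, hb⟩
    push_neg at hB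
    obtain ⟨r, h1, hr, hfail⟩ := hB
    apply hfail
    have := hall r h1 (by omega)
    have hj : (N - (k + 2) + r - 1) + 1 < a.length := by rw [hla]; omega
    rw [getD_tail_append a (2 * N) hj] at this
    have hidx : (N - (k + 2) + r - 1) + 1 = N - (k + 1) + r - 1 := by omega
    rwa [hidx] at this


end CrystalPaper
end

section
/- Let N ≥ 2 be even. In M_N × M_N with the tensor-product operators (1 ≤ l ≤ N by the tensor rule, l = 0 by the super rule), the elements x ⊗ y satisfying f̃_i(x ⊗ y) = 0 for all 0 ≤ i ≤ N are exactly the following: ((+,…,+), 0) ⊗ ((−,…,−), 2k) for each k ∈ ℤ_{≥0}; ((+,…,+), 0) ⊗ ((+^{2i}, −^{N−2i}), 0) for each 1 ≤ i ≤ (N−2)/2, where (+^{2i}, −^{N−2i}) has first 2i entries + and last N−2i entries −; and ((+,…,+), 0) ⊗ ((+,…,+), 0). -/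
/-!
All operators `f̃_l`, `ẽ_l` with `l ≥ 1` have strings of length at most one, so the tensor rule
kills `x ⊗ y` at `l` exactly when `f̃_l x = 0` and `φ_l(y) ≤ ε_l(x)`. Being killed by `f̃_l` for
all `1 ≤ l < N` means having no adjacent `(−,+)`, i.e. being of the form `(+^c, −^{N−c})`.
For `x`, the arrow `f̃_N` then forces `c ≥ N − 1`, the super rule at `0` forces `k = 0`, and
parity forces `c = N`. With `x = ((+,…,+),0)` we have `ε_l(x) = 0` for `l < N`, so `y` has the
same form, and `⟨h_0, x⟩ = 0` lets `f̃_0` act on `y`, forcing `c = 0` or `k = 0`; parity and the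
evenness of `N` sort these into the three families. Conversely `ε_N(x) = 1 ≥ φ_N(y)`.
-/

namespace CrystalPaper

/-- The type-`D_N` Kashiwara raising operator `ẽ_l`, labels `1 ≤ l ≤ N`
(`none` codes `0`).  For `1 ≤ l ≤ N−1` it replaces `(b_l, b_{l+1}) = (+,−)` by `(−,+)`;
`ẽ_N` replaces `(b_{N−1}, b_N) = (+,+)` by `(−,−)`. -/
def eD (N l : ℕ) (b : Seq N) : Option (Seq N) :=
  if h : 1 ≤ l ∧ l + 1 ≤ N then
    let i : Fin N := ⟨l - 1, by omega⟩
    let j : Fin N := ⟨l, by omega⟩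
    if b i = true ∧ b j = false then
      some (Function.update (Function.update b i false) j true)
    else none
  else if h2 : l = N ∧ 2 ≤ N then
    let i : Fin N := ⟨N - 2, by omega⟩
    let j : Fin N := ⟨N - 1, by omega⟩
    if b i = true ∧ b j = true then
      some (Function.update (Function.update b i false) j false)
    else none
  else none

/-- The type-`D_N` Kashiwara lowering operator `f̃_l`, labels `1 ≤ l ≤ N`.
For `1 ≤ l ≤ N−1` it replaces `(b_l, b_{l+1}) = (−,+)` by `(+,−)`;
`f̃_N` replaces `(b_{N−1}, b_N) = (−,−)` by `(+,+)`. -/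
def fD (N l : ℕ) (b : Seq N) : Option (Seq N) :=
  if h : 1 ≤ l ∧ l + 1 ≤ N then
    let i : Fin N := ⟨l - 1, by omega⟩
    let j : Fin N := ⟨l, by omega⟩
    if b i = false ∧ b j = true then
      some (Function.update (Function.update b i true) j false)
    else none
  else if h2 : l = N ∧ 2 ≤ N then
    let i : Fin N := ⟨N - 2, by omega⟩
    let j : Fin N := ⟨N - 1, by omega⟩
    if b i = false ∧ b j = false then
      some (Function.update (Function.update b i true) j true)
    else none
  else none

/-- `n`-fold iteration of a partial operator. -/
def iterOp {σ : Type*} (f : σ → Option σ) : ℕ → σ → Option σ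
  | 0, x => some x
  | n + 1, x => (f x).bind (iterOp f n)

/-- `max {n ≥ 0 : f^n x ≠ 0}`, as a supremum in `ℕ`.  Used for the string
lengths `ε_l(x) = max{n : ẽ_l^n x ≠ 0}` and `φ_l(x) = max{n : f̃_l^n x ≠ 0}`. -/
noncomputable def opMax {σ : Type*} (f : σ → Option σ) (x : σ) : ℕ :=
  sSup {n | iterOp f n x ≠ none}

/-- Elements of the combinatorial model of `B(−ω_N)` for `U_q(D(N,1))`:
pairs of a sign sequence and a non-negative integer. -/
abbrev MSeq (N : ℕ) := Seq N × ℕ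

/-- Membership in the model `M_N` of `B(−ω_N)`: the sign sequence lies in `B_sp^+`
if the integer is even and in `B_sp^−` if it is odd. -/
def memMD (N : ℕ) (x : MSeq N) : Prop :=
  if x.2 % 2 = 0 then BspPlus N x.1 else BspMinus N x.1

/-- Membership in the model `M'_N` of `B(−ω_{N−1})`: parities swapped. -/
def memMD' (N : ℕ) (x : MSeq N) : Prop :=
  if x.2 % 2 = 0 then BspMinus N x.1 else BspPlus N x.1

/-- The operators `ẽ_l`, `0 ≤ l ≤ N`, on the model: for `l ≥ 1` they act on the sign
sequence; `ẽ_0(b,k) = ((+,b_2,…,b_N), k+1)` if `b_1 = −`, and `0` otherwise. -/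
def eSD (N l : ℕ) (x : MSeq N) : Option (MSeq N) :=
  if l = 0 then
    if h : 1 ≤ N then
      if x.1 ⟨0, h⟩ = false then some (Function.update x.1 ⟨0, h⟩ true, x.2 + 1) else none
    else none
  else (eD N l x.1).map fun b => (b, x.2)

/-- The operators `f̃_l`, `0 ≤ l ≤ N`, on the model: for `l ≥ 1` they act on the sign
sequence; `f̃_0(b,k) = ((−,b_2,…,b_N), k−1)` if `b_1 = +` and `k ≥ 1`, and `0` otherwise. -/
def fSD (N l : ℕ) (x : MSeq N) : Option (MSeq N) :=
  if l = 0 then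
    if h : 1 ≤ N then
      if x.1 ⟨0, h⟩ = true ∧ 1 ≤ x.2 then some (Function.update x.1 ⟨0, h⟩ false, x.2 - 1)
      else none
    else none
  else (fD N l x.1).map fun b => (b, x.2)

/-- `⟨h_0, (b,k)⟩ = k` if `b_1 = +`, and `k + 1` if `b_1 = −`. -/
def hZero (N : ℕ) (x : MSeq N) : ℕ :=
  if h : 1 ≤ N then (if x.1 ⟨0, h⟩ = true then x.2 else x.2 + 1) else x.2

/-- The tensor-product lowering operators on pairs of model elements:
the super rule for `l = 0` (`f̃_0(x ⊗ y) = x ⊗ f̃_0 y` if `⟨h_0,x⟩ = 0`, and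
`f̃_0 x ⊗ y` if `⟨h_0,x⟩ > 0`), and the tensor rule for `1 ≤ l ≤ N`. -/
noncomputable def tfSD (N l : ℕ) (p : MSeq N × MSeq N) : Option (MSeq N × MSeq N) :=
  if l = 0 then
    if hZero N p.1 = 0 then (fSD N 0 p.2).map fun y => (p.1, y)
    else (fSD N 0 p.1).map fun x => (x, p.2)
  else
    if opMax (eSD N l) p.1 < opMax (fSD N l) p.2 then (fSD N l p.2).map fun y => (p.1, y)
    else (fSD N l p.1).map fun x => (x, p.2)

section PartialOperator

variable {σ : Type*} {f : σ → Option σ} {x y : σ}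

lemma opMax_eq_zero_of_eq_none (h : f x = none) : opMax f x = 0 := by
  have : {n | iterOp f n x ≠ none} = {0} := by
    ext (_ | n) <;> simp [iterOp, h]
  rw [opMax, this, csSup_singleton]

lemma opMax_eq_one (hx : f x = some y) (hy : f y = none) : opMax f x = 1 := by
  have : {n | iterOp f n x ≠ none} = {0, 1} := by
    ext (_ | _ | n) <;> simp [iterOp, hx, hy]
  rw [opMax, this, csSup_pair]
  rfl

variable (hf : ∀ a b, f a = some b → f b = none)
include hf

lemma opMax_le_one (x : σ) : opMax f x ≤ 1 := by
  cases h : f x with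
  | none => simp [opMax_eq_zero_of_eq_none h]
  | some y => rw [opMax_eq_one h (hf x y h)]

lemma opMax_eq_zero_iff : opMax f x = 0 ↔ f x = none := by
  refine ⟨fun h0 => ?_, opMax_eq_zero_of_eq_none⟩
  cases h : f x with
  | none => rfl
  | some y => rw [opMax_eq_one h (hf x y h)] at h0; cases h0

end PartialOperator

section SignSequence

variable {N : ℕ}

lemma lowSeq_self : lowSeq N N = top N := by
  funext i
  simp [lowSeq, top]

lemma lowSeq_zero : lowSeq N 0 = bot N := by
  funext i
  simp [lowSeq, bot]

lemma antitone_lowSeq (c : ℕ) : Antitone (lowSeq N c) := by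
  intro i j hij
  simp only [lowSeq, Bool.le_iff_imp, decide_eq_true_eq]
  exact fun hj => lt_of_le_of_lt hij hj

lemma exists_eq_lowSeq_of_antitone {b : Seq N} (hb : Antitone b) : ∃ c ≤ N, b = lowSeq N c := by
  refine ⟨(Finset.univ.filter fun i => b i = true).card,
    (Finset.card_filter_le _ _).trans_eq (by simp), funext fun j => ?_⟩
  have hdown : ∀ i j : Fin N, j ≤ i → b i = true → b j = true := fun i j hji hi => by
    simpa [hi, Bool.le_iff_imp] using hb hji
  simp [lowSeq, Fin.lt_card_filter_univ_iff_apply_of_imp _ hdown]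

lemma minusCount_lowSeq (c : ℕ) : minusCount N (lowSeq N c) = N - c := by
  have := Finset.card_filter_add_card_filter_not (s := Finset.univ) (fun i : Fin N => (i : ℕ) < c)
  rw [Fin.card_filter_val_lt, Finset.card_univ, Fintype.card_fin] at this
  simp only [minusCount, lowSeq, decide_eq_false_iff_not]
  omega

lemma memMD_lowSeq_iff (c k : ℕ) : memMD N (lowSeq N c, k) ↔ Even (N - c + k) := by
  simp only [memMD, BspPlus, BspMinus, minusCount_lowSeq, Nat.even_iff, Nat.odd_iff]
  split_ifs <;> omega

end SignSequence

section KashiwaraOperators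

variable {N l : ℕ}

lemma fD_eq_none_iff_of_lt (h1 : 1 ≤ l) (hl : l < N) (b : Seq N) :
    fD N l b = none ↔ b ⟨l, hl⟩ ≤ b ⟨l - 1, by omega⟩ := by
  rw [fD, dif_pos ⟨h1, hl⟩]
  dsimp only
  cases b ⟨l - 1, by omega⟩ <;> cases b ⟨l, hl⟩ <;> simp

lemma fD_last_lowSeq_eq_none_iff (hN : 2 ≤ N) (c : ℕ) :
    fD N N (lowSeq N c) = none ↔ N - 2 < c := by
  rw [fD, dif_neg (by omega), dif_pos ⟨rfl, hN⟩]
  simp [lowSeq]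
  omega

lemma fD_eq_none_of_eq_some {a b : Seq N} (h : fD N l a = some b) : fD N l b = none := by
  unfold fD at h ⊢
  dsimp only at h ⊢
  split_ifs at h ⊢ <;> cases h <;> simp_all [Function.update_apply]

lemma antitone_of_forall_fD_eq_none {b : Seq N}
    (h : ∀ l, 1 ≤ l → l < N → fD N l b = none) : Antitone b := by
  cases N with
  | zero => exact fun i => i.elim0
  | succ n =>
    refine Fin.antitone_iff_succ_le.2 fun i => ?_
    exact (fD_eq_none_iff_of_lt (by omega) (by omega) b).1 (h (i + 1) (by omega) (by omega))

lemma fD_lowSeq_eq_none_of_lt (h1 : 1 ≤ l) (hl : l < N) (c : ℕ) : fD N l (lowSeq N c) = none :=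
  (fD_eq_none_iff_of_lt h1 hl _).2 (antitone_lowSeq c (by simp [Fin.le_def]))

lemma eD_top_eq_none_of_lt (h1 : 1 ≤ l) (hl : l < N) : eD N l (top N) = none := by
  rw [eD, dif_pos ⟨h1, hl⟩]
  simp [top]

lemma eD_last_top (hN : 2 ≤ N) : eD N N (top N) = some (lowSeq N (N - 2)) := by
  rw [eD, dif_neg (by omega), dif_pos ⟨rfl, hN⟩]
  dsimp only
  rw [if_pos ⟨rfl, rfl⟩, Option.some.injEq]
  funext i
  simp only [Function.update_apply, lowSeq, top, Fin.ext_iff]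
  split_ifs <;> simp <;> omega

lemma eD_last_lowSeq (hN : 2 ≤ N) : eD N N (lowSeq N (N - 2)) = none := by
  rw [eD, dif_neg (by omega), dif_pos ⟨rfl, hN⟩]
  simp [lowSeq]

end KashiwaraOperators

section ModelOperators

variable {N l : ℕ}

lemma fSD_eq_none_iff (hl : l ≠ 0) (x : MSeq N) : fSD N l x = none ↔ fD N l x.1 = none := by
  simp [fSD, hl]

lemma fSD_eq_none_of_eq_some (hl : l ≠ 0) {a b : MSeq N} (h : fSD N l a = some b) :
    fSD N l b = none := by
  simp only [fSD, if_neg hl, Option.map_eq_some_iff] at h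
  obtain ⟨b', hb', rfl⟩ := h
  simp [fSD, hl, fD_eq_none_of_eq_some hb']

lemma opMax_eSD_top_of_lt (h1 : 1 ≤ l) (hl : l < N) (k : ℕ) : opMax (eSD N l) (top N, k) = 0 :=
  opMax_eq_zero_of_eq_none (by simp [eSD, show l ≠ 0 by omega, eD_top_eq_none_of_lt h1 hl])

lemma opMax_eSD_last_top (hN : 2 ≤ N) (k : ℕ) : opMax (eSD N N) (top N, k) = 1 :=
  opMax_eq_one (y := (lowSeq N (N - 2), k)) (by simp [eSD, show N ≠ 0 by omega, eD_last_top hN])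
    (by simp [eSD, show N ≠ 0 by omega, eD_last_lowSeq hN])

lemma fSD_zero_eq_none_iff (hN : 1 ≤ N) (x : MSeq N) :
    fSD N 0 x = none ↔ (x.1 ⟨0, hN⟩ = true → x.2 = 0) := by
  simp [fSD, hN]

lemma hZero_of_head_eq_true (hN : 1 ≤ N) {x : MSeq N} (h : x.1 ⟨0, hN⟩ = true) :
    hZero N x = x.2 := by
  simp [hZero, hN, h]

lemma tfSD_zero_eq_none_iff (x y : MSeq N) :
    tfSD N 0 (x, y) = none ↔ if hZero N x = 0 then fSD N 0 y = none else fSD N 0 x = none := by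
  rw [tfSD, if_pos rfl]
  split_ifs <;> simp

lemma tfSD_eq_none_iff (hl : l ≠ 0) (x y : MSeq N) :
    tfSD N l (x, y) = none ↔ fSD N l x = none ∧ opMax (fSD N l) y ≤ opMax (eSD N l) x := by
  rw [tfSD, if_neg hl]
  dsimp only
  split_ifs with hlt
  · simp only [Option.map_eq_none_iff]
    refine ⟨fun hy => ?_, fun h => ?_⟩
    · rw [opMax_eq_zero_of_eq_none hy] at hlt
      omega
    · omega
  · simp [not_lt.1 hlt]

end ModelOperators

def IsLowestWeight (N : ℕ) (p : MSeq N × MSeq N) : Prop := ∀ i ≤ N, tfSD N i p = none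

section LowestWeight

variable {N : ℕ}

lemma fD_top_eq_none {l : ℕ} (hN : 2 ≤ N) (h1 : 1 ≤ l) (hl : l ≤ N) :
    fD N l (top N) = none := by
  rw [← lowSeq_self]
  rcases hl.lt_or_eq with hlN | rfl
  · exact fD_lowSeq_eq_none_of_lt h1 hlN N
  · exact (fD_last_lowSeq_eq_none_iff hN _).2 (by omega)

lemma snd_eq_zero_of_tfSD_zero_eq_none (hN : 1 ≤ N) {x y : MSeq N}
    (hhead : x.1 ⟨0, hN⟩ = true) (h : tfSD N 0 (x, y) = none) : x.2 = 0 := by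
  rw [tfSD_zero_eq_none_iff, hZero_of_head_eq_true hN hhead] at h
  split_ifs at h with h0
  · exact h0
  · exact (fSD_zero_eq_none_iff hN x).1 h hhead

lemma IsLowestWeight.fst_eq_top_zero (hN : 2 ≤ N) {x y : MSeq N} (hx : memMD N x)
    (H : IsLowestWeight N (x, y)) : x = (top N, 0) := by
  have hfx : ∀ l, 1 ≤ l → l ≤ N → fD N l x.1 = none := fun l h1 hl =>
    (fSD_eq_none_iff (by omega) x).1 ((tfSD_eq_none_iff (by omega) x y).1 (H l hl)).1
  obtain ⟨c, hcN, hxc⟩ :=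
    exists_eq_lowSeq_of_antitone (antitone_of_forall_fD_eq_none fun l h1 hl => hfx l h1 hl.le)
  have hc : N - 2 < c := (fD_last_lowSeq_eq_none_iff hN c).1 (hxc ▸ hfx N (by omega) le_rfl)
  have hx2 : x.2 = 0 :=
    snd_eq_zero_of_tfSD_zero_eq_none (by omega) (by rw [hxc]; simp [lowSeq]; omega) (H 0 (by omega))
  obtain ⟨b, k⟩ := x
  obtain rfl : b = lowSeq N c := hxc
  obtain rfl : k = 0 := hx2
  -- at most one `−` is left, and the parity of `M_N` forbids exactly one
  rw [memMD_lowSeq_iff, Nat.even_iff] at hx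
  obtain rfl : c = N := by omega
  rw [lowSeq_self]

lemma IsLowestWeight.exists_snd_eq_lowSeq (hN : 2 ≤ N) {y : MSeq N}
    (H : IsLowestWeight N ((top N, 0), y)) :
    ∃ c ≤ N, y.1 = lowSeq N c ∧ (c = 0 ∨ y.2 = 0) := by
  have hfy : ∀ l, 1 ≤ l → l < N → fD N l y.1 = none := by
    intro l h1 hl
    have hle := ((tfSD_eq_none_iff (by omega) _ _).1 (H l hl.le)).2
    rwa [opMax_eSD_top_of_lt h1 hl, Nat.le_zero,
      opMax_eq_zero_iff fun _ _ => fSD_eq_none_of_eq_some (by omega),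
      fSD_eq_none_iff (by omega)] at hle
  obtain ⟨c, hcN, hyc⟩ := exists_eq_lowSeq_of_antitone (antitone_of_forall_fD_eq_none hfy)
  refine ⟨c, hcN, hyc, ?_⟩
  rcases Nat.eq_zero_or_pos c with hc | hc
  · exact Or.inl hc
  · have h0 := H 0 (by omega)
    rw [tfSD_zero_eq_none_iff, if_pos (hZero_of_head_eq_true (x := (top N, 0)) (by omega) rfl),
      fSD_zero_eq_none_iff (by omega)] at h0
    exact Or.inr (h0 (by rw [hyc]; simp [lowSeq, hc]))

lemma isLowestWeight_top_zero_lowSeq (hN : 2 ≤ N) {c k : ℕ} (hck : c = 0 ∨ k = 0) :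
    IsLowestWeight N ((top N, 0), (lowSeq N c, k)) := by
  intro l hl
  rcases Nat.eq_zero_or_pos l with rfl | hl0
  · rw [tfSD_zero_eq_none_iff, if_pos (hZero_of_head_eq_true (x := (top N, 0)) (by omega) rfl),
      fSD_zero_eq_none_iff (by omega)]
    rcases hck with rfl | rfl
    · simp [lowSeq]
    · exact fun _ => rfl
  · rw [tfSD_eq_none_iff (by omega), fSD_eq_none_iff (by omega)]
    refine ⟨fD_top_eq_none hN hl0 hl, ?_⟩
    rcases hl.lt_or_eq with hlN | rfl
    · rw [opMax_eq_zero_of_eq_none ((fSD_eq_none_iff (by omega) _).2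
        (fD_lowSeq_eq_none_of_lt hl0 hlN c))]
      exact Nat.zero_le _
    · rw [opMax_eSD_last_top hN]
      exact opMax_le_one (fun _ _ => fSD_eq_none_of_eq_some (by omega)) _

lemma isLowestWeight_iff (hN : 2 ≤ N) {x y : MSeq N} (hx : memMD N x) :
    IsLowestWeight N (x, y) ↔
      x = (top N, 0) ∧ ∃ c ≤ N, y.1 = lowSeq N c ∧ (c = 0 ∨ y.2 = 0) := by
  constructor
  · intro H
    obtain rfl := H.fst_eq_top_zero hN hx
    exact ⟨rfl, H.exists_snd_eq_lowSeq hN⟩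
  · rintro ⟨rfl, c, -, hyc, hck⟩
    obtain ⟨b, k⟩ := y
    obtain rfl : b = lowSeq N c := hyc
    exact isLowestWeight_top_zero_lowSeq hN hck

lemma exists_lowSeq_iff (hEven : Even N) {y : MSeq N} (hy : memMD N y) :
    (∃ c ≤ N, y.1 = lowSeq N c ∧ (c = 0 ∨ y.2 = 0)) ↔
      (∃ k, y = (bot N, 2 * k)) ∨
        (∃ i, 1 ≤ i ∧ 2 * i ≤ N - 2 ∧ y = (lowSeq N (2 * i), 0)) ∨ y = (top N, 0) := by
  obtain ⟨b, k⟩ := y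
  simp only [Prod.mk.injEq]
  constructor
  · rintro ⟨c, hcN, rfl, hck⟩
    rw [memMD_lowSeq_iff, Nat.even_iff] at hy
    rw [Nat.even_iff] at hEven
    rcases Nat.eq_zero_or_pos c with rfl | hc
    · exact Or.inl ⟨k / 2, lowSeq_zero, by omega⟩
    obtain rfl : k = 0 := by omega
    rcases hcN.lt_or_eq with hlt | rfl
    · obtain ⟨i, rfl⟩ : ∃ i, c = 2 * i := ⟨c / 2, by omega⟩
      exact Or.inr (Or.inl ⟨i, by omega, by omega, rfl, rfl⟩)
    · exact Or.inr (Or.inr ⟨lowSeq_self, rfl⟩)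
  · rintro (⟨k, rfl, rfl⟩ | ⟨i, -, hi, rfl, rfl⟩ | ⟨rfl, rfl⟩)
    · exact ⟨0, by omega, lowSeq_zero.symm, Or.inl rfl⟩
    · exact ⟨2 * i, by omega, rfl, Or.inr rfl⟩
    · exact ⟨N, le_rfl, lowSeq_self.symm, Or.inr rfl⟩

end LowestWeight

/-- For `N ≥ 2` even, the lowest weight elements of `M_N × M_N` (the
model of `B(−ω_N) ⊗ B(−ω_N)` for `U_q(D(N,1))`), i.e. the elements killed by all
tensor-product operators `f̃_i`, `0 ≤ i ≤ N`, are exactly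
`((+,…,+),0) ⊗ ((−,…,−),2k)` for `k ∈ ℤ_{≥0}`,
`((+,…,+),0) ⊗ ((+^{2i},−^{N−2i}),0)` for `1 ≤ i ≤ (N−2)/2`, and
`((+,…,+),0) ⊗ ((+,…,+),0)`. -/
theorem lowest_weight_MD_tensor_MD (N : ℕ) (hN : 2 ≤ N) (hEven : Even N)
    (x y : MSeq N) (hx : memMD N x) (hy : memMD N y) :
    (∀ i, i ≤ N → tfSD N i (x, y) = none) ↔
      (x = (top N, 0) ∧
        ((∃ k, y = (bot N, 2 * k)) ∨
          (∃ i, 1 ≤ i ∧ 2 * i ≤ N - 2 ∧ y = (lowSeq N (2 * i), 0)) ∨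
          y = (top N, 0))) :=
  (isLowestWeight_iff hN hx).trans (and_congr_right' (exists_lowSeq_iff hEven hy))

end CrystalPaper
end
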